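/- arXiv:1005.0489 — 2 statements merged into one kernel-verified Lean document; each statement's English description precedes it below -/
import Mathlib

section
/- Let 1 ≤ p < ∞ and equip ℓ^p = ℓ^p(ℕ, ℂ) with the contractive c₀-module structure given by coordinatewise multiplication. Then ℓ^p is extremely injective with respect to the class of all homogeneous contractive normed c₀-modules: for all homogeneous contractive normed c₀-modules X, Y, every isometric morphism i : X → Y and every morphism φ : X → ℓ^p, there exists a morphism ψ : Y → ℓ^p with ψ ∘ i = φ and ‖ψ‖ = ‖φ‖. -/
open Filter MeasureTheory

noncomputable section

/-- The algebra `c₀` of complex sequences converging to zero, with pointwise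
operations and the supremum norm. -/
abbrev czero : Type := ZeroAtInftyContinuousMap ℕ ℂ

/-- The `n`-th ort: the indicator sequence of `{n}`. -/
def ort (n : ℕ) : czero where
  toFun := fun m => if m = n then 1 else 0
  continuous_toFun := continuous_of_discreteTopology
  zero_at_infty' := by
    rw [cocompact_eq_atTop]
    have h : (fun m : ℕ => if m = n then (1 : ℂ) else 0) =ᶠ[atTop] fun _ => (0 : ℂ) := by
      filter_upwards [eventually_gt_atTop n] with m hm
      simp [Nat.ne_of_gt hm]
    exact (tendsto_congr' h).mpr tendsto_const_nhds

/-- `P N = p⁰ + ⋯ + p^{N-1}`. -/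
def PN (N : ℕ) : czero := ∑ n ∈ Finset.range N, ort n

/-- A (contractive) normed `c₀`-module structure on a complex normed space `X`. -/
structure C0Mod (X : Type) [NormedAddCommGroup X] [NormedSpace ℂ X] where
  smul : czero → X → X
  add_smul : ∀ a b x, smul (a + b) x = smul a x + smul b x
  smul_add : ∀ a x y, smul a (x + y) = smul a x + smul a y
  mul_smul : ∀ a b x, smul (a * b) x = smul a (smul b x)
  csmul_left : ∀ (c : ℂ) a x, smul (c • a) x = c • smul a x
  csmul_right : ∀ (c : ℂ) a x, smul a (c • x) = c • smul a x
  norm_smul_le : ∀ a x, ‖smul a x‖ ≤ ‖a‖ * ‖x‖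

namespace C0Mod

variable {X : Type} [NormedAddCommGroup X] [NormedSpace ℂ X] (M : C0Mod X)

/-- The action of `a ∈ c₀` as a continuous linear map. -/
def lsmul (a : czero) : X →L[ℂ] X :=
  LinearMap.mkContinuous
    { toFun := M.smul a
      map_add' := M.smul_add a
      map_smul' := fun c x => M.csmul_right c a x }
    ‖a‖ (fun x => M.norm_smul_le a x)

@[simp] lemma lsmul_apply (a : czero) (x : X) : M.lsmul a x = M.smul a x := rfl

/-- The essential part `X_es` of `X`: the closure of the linear span of all
products `a • x`. -/
def essSet : Set X :=
  closure (Submodule.span ℂ {y : X | ∃ (a : czero) (x : X), y = M.smul a x} : Set X)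

/-- A module is essential if it coincides with its essential part. -/
def Essential : Prop := M.essSet = Set.univ

/-- The `n`-th coordinate submodule `Xₙ = {pⁿ • x : x ∈ X}`. -/
def coordSub (n : ℕ) : Submodule ℂ X := LinearMap.range ((M.lsmul (ort n)) : X →ₗ[ℂ] X)

lemma mem_coordSub (n : ℕ) (x : X) : M.smul (ort n) x ∈ M.coordSub n := ⟨x, rfl⟩

/-- A module is homogeneous if the norm of an element is determined by the norms
of its coordinates. -/
def Homogeneous : Prop :=
  ∀ x y : X, (∀ n : ℕ, ‖M.smul (ort n) x‖ = ‖M.smul (ort n) y‖) → ‖x‖ = ‖y‖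

/-- The annihilator of `c₀` in `X`. -/
def ann : Submodule ℂ X where
  carrier := {x : X | ∀ a : czero, M.smul a x = 0}
  add_mem' := by
    intro x y hx hy
    intro a
    rw [M.smul_add, hx a, hy a, add_zero]
  zero_mem' := by
    intro a
    have h := M.smul_add a 0 0
    simp only [add_zero] at h
    have := congrArg (fun z => z - M.smul a 0) h
    simpa using this.symm
  smul_mem' := by
    intro c x hx a
    rw [M.csmul_right, hx a, smul_zero]

end C0Mod
open scoped ENNReal

lemma czero_apply_norm_le (a : czero) (n : ℕ) : ‖a n‖ ≤ ‖a‖ := by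
  rw [← ZeroAtInftyContinuousMap.norm_toBCF_eq_norm]
  exact a.toBCF.norm_coe_le_norm n

lemma memℓp_czero_mul {p : ℝ≥0∞} (hp : 1 ≤ p) (a : czero) (f : ℕ → ℂ)
    (hf : Memℓp f p) : Memℓp (fun n => a n * f n) p := by
  rcases p.trichotomy with rfl | rfl | hpt
  · exact absurd hp (by simp)
  · obtain ⟨C, hC⟩ := hf.bddAbove
    apply memℓp_infty
    refine ⟨‖a‖ * C, ?_⟩
    rintro r ⟨n, rfl⟩
    calc ‖a n * f n‖ = ‖a n‖ * ‖f n‖ := norm_mul _ _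
      _ ≤ ‖a‖ * C := by
          have h1 := czero_apply_norm_le a n
          have h2 : ‖f n‖ ≤ C := hC (Set.mem_range_self n)
          exact mul_le_mul h1 h2 (norm_nonneg _) (norm_nonneg _)
  · apply memℓp_gen
    have hsum : Summable (fun n => ‖a‖ ^ p.toReal * ‖f n‖ ^ p.toReal) :=
      (hf.summable hpt).mul_left _
    refine hsum.of_nonneg_of_le
      (fun n => Real.rpow_nonneg (norm_nonneg _) _) (fun n => ?_)
    calc ‖a n * f n‖ ^ p.toReal ≤ (‖a‖ * ‖f n‖) ^ p.toReal := by
          apply Real.rpow_le_rpow (norm_nonneg _) _ hpt.le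
          rw [norm_mul]
          exact mul_le_mul_of_nonneg_right (czero_apply_norm_le a n) (norm_nonneg _)
      _ = ‖a‖ ^ p.toReal * ‖f n‖ ^ p.toReal :=
          Real.mul_rpow (norm_nonneg _) (norm_nonneg _)

/-- The contractive normed `c₀`-module `ℓ^p(ℕ, ℂ)` (`1 ≤ p ≤ ∞`), with the
coordinatewise action of `c₀`. -/
def lpC0Mod (p : ℝ≥0∞) [hp : Fact (1 ≤ p)] : C0Mod (lp (fun _ : ℕ => ℂ) p) where
  smul a x := ⟨fun n => a n * x n, memℓp_czero_mul hp.out a x (lp.memℓp x)⟩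
  add_smul a b x := by
    apply lp.ext
    rw [lp.coeFn_add]
    funext n
    show ((a + b) n) * x n = a n * x n + b n * x n
    rw [ZeroAtInftyContinuousMap.coe_add, Pi.add_apply, add_mul]
  smul_add a x y := by
    apply lp.ext
    simp only [lp.coeFn_add]
    funext n
    show a n * ((x + y : lp _ p) n) = a n * x n + a n * y n
    rw [lp.coeFn_add, Pi.add_apply, mul_add]
  mul_smul a b x := by
    apply lp.ext
    funext n
    show ((a * b) n) * x n = a n * (b n * x n)
    rw [ZeroAtInftyContinuousMap.coe_mul, Pi.mul_apply, mul_assoc]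
  csmul_left c a x := by
    apply lp.ext
    rw [lp.coeFn_smul]
    funext n
    show ((c • a) n) * x n = c • (a n * x n)
    rw [ZeroAtInftyContinuousMap.coe_smul, Pi.smul_apply, smul_eq_mul, smul_eq_mul, mul_assoc]
  csmul_right c a x := by
    apply lp.ext
    simp only [lp.coeFn_smul]
    funext n
    show a n * ((c • x : lp _ p) n) = c • (a n * x n)
    rw [lp.coeFn_smul, Pi.smul_apply, smul_eq_mul, smul_eq_mul]
    ring
  norm_smul_le a x := by
    rcases p.trichotomy with rfl | rfl | hpt
    · exact absurd hp.out (by simp)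
    · apply lp.norm_le_of_forall_le (mul_nonneg (norm_nonneg a) (norm_nonneg x))
      intro n
      show ‖a n * x n‖ ≤ ‖a‖ * ‖x‖
      rw [norm_mul]
      exact mul_le_mul (czero_apply_norm_le a n)
        (lp.norm_apply_le_norm ENNReal.top_ne_zero x n) (norm_nonneg _) (norm_nonneg _)
    · apply lp.norm_le_of_tsum_le hpt (mul_nonneg (norm_nonneg a) (norm_nonneg x))
      have hx : Summable (fun n => ‖x n‖ ^ p.toReal) := (lp.memℓp x).summable hpt
      have hax : Summable (fun n => ‖a n * x n‖ ^ p.toReal) :=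
        (memℓp_czero_mul hp.out a x (lp.memℓp x)).summable hpt
      have hle : ∀ n : ℕ, ‖a n * x n‖ ^ p.toReal ≤ ‖a‖ ^ p.toReal * ‖x n‖ ^ p.toReal := by
        intro n
        calc ‖a n * x n‖ ^ p.toReal ≤ (‖a‖ * ‖x n‖) ^ p.toReal := by
              apply Real.rpow_le_rpow (norm_nonneg _) _ hpt.le
              rw [norm_mul]
              exact mul_le_mul_of_nonneg_right (czero_apply_norm_le a n) (norm_nonneg _)
          _ = ‖a‖ ^ p.toReal * ‖x n‖ ^ p.toReal :=
              Real.mul_rpow (norm_nonneg _) (norm_nonneg _)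
      calc (∑' n : ℕ, ‖a n * x n‖ ^ p.toReal)
          ≤ ∑' n : ℕ, ‖a‖ ^ p.toReal * ‖x n‖ ^ p.toReal :=
            Summable.tsum_le_tsum hle hax (hx.mul_left _)
        _ = ‖a‖ ^ p.toReal * ∑' n : ℕ, ‖x n‖ ^ p.toReal := tsum_mul_left
        _ = ‖a‖ ^ p.toReal * ‖x‖ ^ p.toReal := by rw [← lp.norm_rpow_eq_tsum hpt]
        _ = (‖a‖ * ‖x‖) ^ p.toReal := (Real.mul_rpow (norm_nonneg _) (norm_nonneg _)).symm

/-! The `n`-th coordinate functional `x ↦ (φ x)ₙ` is extended through the isometry `i` by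
Hahn–Banach to `gₙ` on `Y` with the same norm, and `ψ y := (gₙ (pⁿ • y))ₙ`. The point is the
bound `‖ψ y‖ ≤ ‖φ‖ ‖y‖`. Given a finite set `s` of coordinates, pick `xₙ ∈ pⁿ • X` with
`‖xₙ‖ = ‖pⁿ • y‖` almost norming the `n`-th functional. The coordinates of `i (∑ xₙ)` and of
`(∑_{n ∈ s} pⁿ) • y` have equal norms, so homogeneity of `Y` gives `‖∑ xₙ‖ ≤ ‖y‖`, while
`φ (∑ xₙ)` has `n`-th coordinate `(φ xₙ)ₙ`; hence `∑_{n ∈ s} ‖gₙ (pⁿ • y)‖ ^ p ≤ (‖φ‖ ‖y‖) ^ p`. -/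

open scoped Topology

lemma ort_apply (n m : ℕ) : ort n m = if m = n then 1 else 0 := rfl

lemma ort_mul (n : ℕ) (a : czero) : ort n * a = a n • ort n := by
  ext m
  by_cases h : m = n <;> simp [ort_apply, h]

lemma ort_mul_ort (m n : ℕ) : ort m * ort n = if m = n then ort m else 0 := by
  rw [ort_mul, ort_apply]
  split_ifs with h <;> simp [h]

lemma ort_mul_sum_ort (m : ℕ) (s : Finset ℕ) :
    ort m * ∑ n ∈ s, ort n = if m ∈ s then ort m else 0 := by
  simp [Finset.mul_sum, ort_mul_ort]

lemma czero_sum_apply (s : Finset ℕ) (f : ℕ → czero) (m : ℕ) :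
    (∑ n ∈ s, f n) m = ∑ n ∈ s, f n m := by
  induction s using Finset.cons_induction <;> simp [*]

lemma norm_sum_ort_le (s : Finset ℕ) : ‖∑ n ∈ s, ort n‖ ≤ 1 := by
  rw [← ZeroAtInftyContinuousMap.norm_toBCF_eq_norm,
    BoundedContinuousFunction.norm_le zero_le_one]
  intro m
  simp only [ZeroAtInftyContinuousMap.toBCF_apply, czero_sum_apply, ort_apply, Finset.sum_ite_eq]
  split_ifs <;> simp

namespace C0Mod

variable {X : Type} [NormedAddCommGroup X] [NormedSpace ℂ X] (M : C0Mod X)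

lemma smul_zero_left (x : X) : M.smul 0 x = 0 := by
  simpa using M.csmul_left 0 0 x

lemma smul_sum (a : czero) {ι : Type*} (s : Finset ι) (x : ι → X) :
    M.smul a (∑ n ∈ s, x n) = ∑ n ∈ s, M.smul a (x n) :=
  map_sum (M.lsmul a) x s

lemma norm_smul_ort_le (n : ℕ) (x : X) : ‖M.smul (ort n) x‖ ≤ ‖x‖ :=
  (M.norm_smul_le _ x).trans <| by
    simpa using mul_le_mul_of_nonneg_right (norm_sum_ort_le {n}) (norm_nonneg x)

lemma smul_ort_smul (n : ℕ) (a : czero) (x : X) :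
    M.smul (ort n) (M.smul a x) = a n • M.smul (ort n) x := by
  rw [← M.mul_smul, ort_mul, M.csmul_left]

lemma smul_ort_smul_ort (m n : ℕ) (x : X) :
    M.smul (ort m) (M.smul (ort n) x) = if m = n then M.smul (ort n) x else 0 := by
  rw [smul_ort_smul, ort_apply]
  split_ifs with h <;> simp [h]

lemma smul_ort_sum_of_smul_ort_eq {s : Finset ℕ} {x : ℕ → X}
    (hx : ∀ n ∈ s, M.smul (ort n) (x n) = x n) (m : ℕ) :
    M.smul (ort m) (∑ n ∈ s, x n) = if m ∈ s then x m else 0 := by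
  rw [smul_sum, ← Finset.sum_ite_eq s m x]
  refine Finset.sum_congr rfl fun n hn => ?_
  rw [← hx n hn, smul_ort_smul_ort, hx n hn]

lemma smul_ort_smul_sum_ort (m : ℕ) (s : Finset ℕ) (y : X) :
    M.smul (ort m) (M.smul (∑ n ∈ s, ort n) y) = if m ∈ s then M.smul (ort m) y else 0 := by
  rw [← M.mul_smul, ort_mul_sum_ort]
  split_ifs <;> simp [smul_zero_left]

lemma exists_smul_ort_eq_self_lt_norm_apply {F : Type*} [NormedAddCommGroup F]
    [NormedSpace ℂ F] (f : X →L[ℂ] F) {n : ℕ} (hf : ∀ x, f (M.smul (ort n) x) = f x)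
    {c r : ℝ} (hc0 : 0 ≤ c) (hc : c < ‖f‖ * r) : ∃ x, M.smul (ort n) x = x ∧ ‖x‖ = r ∧ c < ‖f x‖ := by
  have hr : 0 < r := pos_of_mul_pos_right (hc0.trans_lt hc) (norm_nonneg f)
  obtain ⟨x, hx1, hfx⟩ := f.exists_lt_apply_of_lt_opNorm ((div_lt_iff₀ hr).2 hc)
  set z := M.smul (ort n) x
  have hfz : f z = f x := hf x
  have hz1 : ‖z‖ < 1 := (M.norm_smul_ort_le n x).trans_lt hx1
  have hz0 : 0 < ‖z‖ := by
    refine norm_pos_iff.2 fun hz => ?_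
    rw [← hfz, hz, map_zero, norm_zero] at hfx
    exact hfx.not_ge (div_nonneg hc0 hr.le)
  refine ⟨((r / ‖z‖ : ℝ) : ℂ) • z, ?_, ?_, ?_⟩
  · rw [M.csmul_right, smul_ort_smul_ort, if_pos rfl]
  · rw [norm_smul, Complex.norm_real, Real.norm_of_nonneg (by positivity),
      div_mul_cancel₀ _ hz0.ne']
  · rw [map_smul, norm_smul, Complex.norm_real, Real.norm_of_nonneg (by positivity), hfz]
    calc c = r * (c / r) := by field_simp
      _ < r * ‖f x‖ := by gcongr
      _ ≤ r / ‖z‖ * ‖f x‖ := by gcongr; exact le_div_self hr.le hz0 hz1.le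

end C0Mod

theorem exists_extension_comp_isometry {𝕜 X Y : Type*} [RCLike 𝕜] [NormedAddCommGroup X]
    [NormedSpace 𝕜 X] [NormedAddCommGroup Y] [NormedSpace 𝕜 Y] (i : X →L[𝕜] Y)
    (hi : ∀ x, ‖i x‖ = ‖x‖) (f : StrongDual 𝕜 X) :
    ∃ g : StrongDual 𝕜 Y, g.comp i = f ∧ ‖g‖ = ‖f‖ := by
  let e : X ≃ₗᵢ[𝕜] LinearMap.range (i : X →ₗ[𝕜] Y) :=
    (⟨i.toLinearMap, hi⟩ : X →ₗᵢ[𝕜] Y).equivRange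
  obtain ⟨g, hg, hg_norm⟩ := exists_extension_norm_eq (LinearMap.range (i : X →ₗ[𝕜] Y))
    (f.comp (e.symm : LinearMap.range (i : X →ₗ[𝕜] Y) →L[𝕜] X))
  rw [f.opNorm_comp_linearIsometryEquiv] at hg_norm
  refine ⟨g, ContinuousLinearMap.ext fun x => ?_, hg_norm⟩
  exact (hg (e x)).trans (by simp)

theorem exists_lp_apply_eq_of_sum_rpow_le {𝕜 Y α : Type*} [RCLike 𝕜] [NormedAddCommGroup Y]
    [NormedSpace 𝕜 Y] {E : α → Type*} [∀ a, NormedAddCommGroup (E a)] [∀ a, NormedSpace 𝕜 (E a)]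
    {p : ℝ≥0∞} [Fact (1 ≤ p)] (hp : p ≠ ∞) (L : ∀ a, Y →L[𝕜] E a) {C : ℝ} (hC : 0 ≤ C)
    (hL : ∀ y (s : Finset α), ∑ a ∈ s, ‖L a y‖ ^ p.toReal ≤ (C * ‖y‖) ^ p.toReal) :
    ∃ ψ : Y →L[𝕜] lp E p, (∀ y a, ψ y a = L a y) ∧ ‖ψ‖ ≤ C := by
  have hp0 : 0 < p.toReal := ENNReal.toReal_pos (zero_lt_one.trans_le Fact.out).ne' hp
  let ψ : Y →ₗ[𝕜] lp E p :=
    { toFun y := ⟨fun a => L a y, memℓp_gen' (hL y)⟩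
      map_add' y z := lp.ext <| funext fun a => map_add (L a) y z
      map_smul' c y := lp.ext <| funext fun a => map_smul (L a) c y }
  refine ⟨ψ.mkContinuous C fun y => ?_, fun y a => rfl, LinearMap.mkContinuous_norm_le _ hC _⟩
  exact lp.norm_le_of_forall_sum_le hp0 (by positivity) (hL y)

lemma le_of_forall_rpow_mul_le {q A B : ℝ} (hq : 0 < q)
    (h : ∀ t ∈ Set.Ioo (0 : ℝ) 1, t ^ q * A ≤ B) : A ≤ B := by
  have hlim : Filter.Tendsto (fun t : ℝ => t ^ q * A) (𝓝[<] 1) (𝓝 A) := by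
    have : ContinuousAt (fun t : ℝ => t ^ q * A) 1 :=
      (continuousAt_id.rpow_const (Or.inr hq.le)).mul continuousAt_const
    simpa using this.tendsto.mono_left nhdsWithin_le_nhds
  exact le_of_tendsto hlim (Filter.mem_of_superset (Ioo_mem_nhdsLT zero_lt_one) h)

lemma lpC0Mod_smul_apply {p : ℝ≥0∞} [Fact (1 ≤ p)] (a : czero) (f : lp (fun _ : ℕ => ℂ) p)
    (n : ℕ) : (lpC0Mod p).smul a f n = a n * f n := rfl

section Extension

variable {X Y : Type} [NormedAddCommGroup X] [NormedSpace ℂ X] [NormedAddCommGroup Y]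
  [NormedSpace ℂ Y] {Mx : C0Mod X} {My : C0Mod Y} {i : X →L[ℂ] Y}
  {p : ℝ≥0∞} [Fact (1 ≤ p)] {φ : X →L[ℂ] lp (fun _ : ℕ => ℂ) p}

lemma norm_sum_le_of_norm_eq_norm_smul_ort (hY : My.Homogeneous)
    (hi_mod : ∀ a x, i (Mx.smul a x) = My.smul a (i x)) (hi_iso : ∀ x, ‖i x‖ = ‖x‖)
    {s : Finset ℕ} {x : ℕ → X} {y : Y} (hx : ∀ n ∈ s, Mx.smul (ort n) (x n) = x n)
    (hxy : ∀ n ∈ s, ‖x n‖ = ‖My.smul (ort n) y‖) : ‖∑ n ∈ s, x n‖ ≤ ‖y‖ := by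
  have hcoord : ∀ m, ‖My.smul (ort m) (i (∑ n ∈ s, x n))‖
      = ‖My.smul (ort m) (My.smul (∑ n ∈ s, ort n) y)‖ := by
    intro m
    rw [← hi_mod, hi_iso, Mx.smul_ort_sum_of_smul_ort_eq hx, My.smul_ort_smul_sum_ort]
    split_ifs with hm
    · exact hxy m hm
    · simp
  calc ‖∑ n ∈ s, x n‖ = ‖i (∑ n ∈ s, x n)‖ := (hi_iso _).symm
    _ = ‖My.smul (∑ n ∈ s, ort n) y‖ := hY _ _ hcoord
    _ ≤ ‖∑ n ∈ s, ort n‖ * ‖y‖ := My.norm_smul_le _ _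
    _ ≤ ‖y‖ := by simpa using mul_le_mul_of_nonneg_right (norm_sum_ort_le s) (norm_nonneg y)

lemma apply_smul_ort_apply (hφ : ∀ a x, φ (Mx.smul a x) = (lpC0Mod p).smul a (φ x))
    (n : ℕ) (x : X) : φ (Mx.smul (ort n) x) n = φ x n := by
  simp [hφ, lpC0Mod_smul_apply, ort_apply]

lemma sum_norm_apply_rpow_le (hp : p ≠ ∞) (hY : My.Homogeneous)
    (hi_mod : ∀ a x, i (Mx.smul a x) = My.smul a (i x)) (hi_iso : ∀ x, ‖i x‖ = ‖x‖)
    (hφ : ∀ a x, φ (Mx.smul a x) = (lpC0Mod p).smul a (φ x))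
    {s : Finset ℕ} {x : ℕ → X} {y : Y} (hx : ∀ n ∈ s, Mx.smul (ort n) (x n) = x n)
    (hxy : ∀ n ∈ s, ‖x n‖ = ‖My.smul (ort n) y‖) :
    ∑ n ∈ s, ‖φ (x n) n‖ ^ p.toReal ≤ (‖φ‖ * ‖y‖) ^ p.toReal := by
  have hp0 : 0 < p.toReal := ENNReal.toReal_pos (zero_lt_one.trans_le Fact.out).ne' hp
  have hcoord : ∀ n ∈ s, φ (∑ m ∈ s, x m) n = φ (x n) n := fun n hn => by
    rw [← apply_smul_ort_apply hφ, Mx.smul_ort_sum_of_smul_ort_eq hx, if_pos hn]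
  calc ∑ n ∈ s, ‖φ (x n) n‖ ^ p.toReal = ∑ n ∈ s, ‖φ (∑ m ∈ s, x m) n‖ ^ p.toReal :=
        Finset.sum_congr rfl fun n hn => by rw [hcoord n hn]
    _ ≤ ‖φ (∑ m ∈ s, x m)‖ ^ p.toReal := lp.sum_rpow_le_norm_rpow hp0 _ s
    _ ≤ (‖φ‖ * ‖y‖) ^ p.toReal := by
        gcongr
        exact φ.le_opNorm_of_le (norm_sum_le_of_norm_eq_norm_smul_ort hY hi_mod hi_iso hx hxy)

lemma sum_opNorm_mul_norm_smul_ort_rpow_le (hp : p ≠ ∞) (hY : My.Homogeneous)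
    (hi_mod : ∀ a x, i (Mx.smul a x) = My.smul a (i x)) (hi_iso : ∀ x, ‖i x‖ = ‖x‖)
    (hφ : ∀ a x, φ (Mx.smul a x) = (lpC0Mod p).smul a (φ x)) (y : Y) (s : Finset ℕ) :
    ∑ n ∈ s, (‖lp.evalCLM ℂ _ p n ∘L φ‖ * ‖My.smul (ort n) y‖) ^ p.toReal
      ≤ (‖φ‖ * ‖y‖) ^ p.toReal := by
  have hp0 : 0 < p.toReal := ENNReal.toReal_pos (zero_lt_one.trans_le Fact.out).ne' hp
  set c : ℕ → ℝ := fun n => ‖lp.evalCLM ℂ _ p n ∘L φ‖ * ‖My.smul (ort n) y‖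
  change ∑ n ∈ s, c n ^ p.toReal ≤ _
  have hc0 : ∀ n, 0 ≤ c n := fun n => by positivity
  -- Norming vectors of norm `‖pⁿ • y‖` in `pⁿ • X` need not exist when `c n = 0`.
  rw [← Finset.sum_filter_of_ne (p := fun n => 0 < c n) fun n _ hn =>
    (hc0 n).lt_of_ne' fun h => hn (by rw [h, Real.zero_rpow hp0.ne'])]
  refine le_of_forall_rpow_mul_le hp0 fun t ht => ?_
  have hex : ∀ n ∈ s.filter (0 < c ·), ∃ x, Mx.smul (ort n) x = x ∧
      ‖x‖ = ‖My.smul (ort n) y‖ ∧ t * c n < ‖φ x n‖ := fun n hn =>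
    Mx.exists_smul_ort_eq_self_lt_norm_apply _ (apply_smul_ort_apply hφ n)
      (mul_nonneg ht.1.le (hc0 n)) (mul_lt_of_lt_one_left (Finset.mem_filter.1 hn).2 ht.2)
  choose! x hx_ort hx_norm hx_lt using hex
  calc t ^ p.toReal * ∑ n ∈ s.filter (0 < c ·), c n ^ p.toReal
      = ∑ n ∈ s.filter (0 < c ·), (t * c n) ^ p.toReal := by
        rw [Finset.mul_sum]
        exact Finset.sum_congr rfl fun n _ => (Real.mul_rpow ht.1.le (hc0 n)).symm
    _ ≤ ∑ n ∈ s.filter (0 < c ·), ‖φ (x n) n‖ ^ p.toReal :=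
        Finset.sum_le_sum fun n hn =>
          Real.rpow_le_rpow (mul_nonneg ht.1.le (hc0 n)) (hx_lt n hn).le hp0.le
    _ ≤ (‖φ‖ * ‖y‖) ^ p.toReal := sum_norm_apply_rpow_le hp hY hi_mod hi_iso hφ hx_ort hx_norm

end Extension

/-- For `1 ≤ p < ∞`, the `c₀`-module `ℓ^p = ℓ^p(ℕ, ℂ)` (with
the coordinatewise action) is extremely injective with respect to the class of
all homogeneous contractive normed `c₀`-modules. -/
theorem lp_extremely_injective (p : ℝ≥0∞) [Fact (1 ≤ p)] (hptop : p ≠ ∞) :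
    ∀ (X Y : Type) [NormedAddCommGroup X] [NormedSpace ℂ X]
      [NormedAddCommGroup Y] [NormedSpace ℂ Y]
      (Mx : C0Mod X) (My : C0Mod Y),
      Mx.Homogeneous → My.Homogeneous →
      ∀ (i : X →L[ℂ] Y),
        (∀ (a : czero) (x : X), i (Mx.smul a x) = My.smul a (i x)) →
        (∀ x : X, ‖i x‖ = ‖x‖) →
        ∀ (φ : X →L[ℂ] lp (fun _ : ℕ => ℂ) p),
          (∀ (a : czero) (x : X), φ (Mx.smul a x) = (lpC0Mod p).smul a (φ x)) →
          ∃ ψ : Y →L[ℂ] lp (fun _ : ℕ => ℂ) p,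
            (∀ (a : czero) (y : Y), ψ (My.smul a y) = (lpC0Mod p).smul a (ψ y)) ∧
            (∀ x : X, ψ (i x) = φ x) ∧ ‖ψ‖ = ‖φ‖ := by
  intro X Y _ _ _ _ Mx My _ hY i hi_mod hi_iso φ hφ
  choose g hg_comp hg_norm using fun n =>
    exists_extension_comp_isometry i hi_iso (lp.evalCLM ℂ _ p n ∘L φ)
  have hg_le (n : ℕ) (y : Y) :
      ‖g n (My.smul (ort n) y)‖ ≤ ‖lp.evalCLM ℂ _ p n ∘L φ‖ * ‖My.smul (ort n) y‖ :=
    hg_norm n ▸ (g n).le_opNorm _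
  obtain ⟨ψ, hψ, hψ_norm⟩ := exists_lp_apply_eq_of_sum_rpow_le hptop
    (fun n => g n ∘L My.lsmul (ort n)) (norm_nonneg φ) fun y s =>
      (Finset.sum_le_sum fun n _ => by gcongr; exact hg_le n y).trans
        (sum_opNorm_mul_norm_smul_ort_rpow_le hptop hY hi_mod hi_iso hφ y s)
  have hψi (x : X) : ψ (i x) = φ x := lp.ext <| funext fun n => by
    rw [hψ, ContinuousLinearMap.comp_apply, C0Mod.lsmul_apply, ← hi_mod,
      ← ContinuousLinearMap.comp_apply, hg_comp]
    exact apply_smul_ort_apply hφ n x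
  refine ⟨ψ, fun a y => lp.ext <| funext fun n => ?_, hψi, le_antisymm hψ_norm ?_⟩
  · simp [hψ, lpC0Mod_smul_apply, My.smul_ort_smul]
  · refine φ.opNorm_le_bound (norm_nonneg ψ) fun x => ?_
    rw [← hψi, ← hi_iso x]
    exact ψ.le_opNorm _
end
end

section
/- Let X and Y be contractive normed c₀-modules and let φ : X → Y be a bounded morphism of c₀-modules that is topologically injective, i.e. there exists c > 0 with ‖φ(x)‖ ≥ c‖x‖ for all x ∈ X. If x ∈ X satisfies φ(x) ∈ Y_es, then x ∈ X_es. -/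
open Filter MeasureTheory

noncomputable section

lemma czero_norm_le (f : czero) {C : ℝ} (hC : 0 ≤ C) (h : ∀ n, ‖f n‖ ≤ C) : ‖f‖ ≤ C := by
  rw [← ZeroAtInftyContinuousMap.norm_toBCF_eq_norm]
  exact (BoundedContinuousFunction.norm_le hC).mpr h

lemma PN_apply (N m : ℕ) : PN N m = if m < N then 1 else 0 := by
  have : (PN N) m = ∑ n ∈ Finset.range N, (ort n) m := by
    unfold PN
    induction N with
    | zero => simp
    | succ n ih => rw [Finset.sum_range_succ, Finset.sum_range_succ, ← ih,
        ZeroAtInftyContinuousMap.coe_add, Pi.add_apply]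
  rw [this]
  simp only [ort, ZeroAtInftyContinuousMap.coe_mk, ContinuousMap.coe_mk]
  rw [Finset.sum_ite_eq (Finset.range N) m (fun _ => (1 : ℂ))]
  simp [Finset.mem_range]

lemma norm_PN_le (N : ℕ) : ‖PN N‖ ≤ 1 := by
  apply czero_norm_le _ zero_le_one
  intro m
  rw [PN_apply]
  split <;> simp

lemma tendsto_norm_PN_mul_sub (a : czero) :
    Tendsto (fun N => ‖PN N * a - a‖) atTop (nhds 0) := by
  rw [Metric.tendsto_atTop]
  intro ε hε
  have hz : Tendsto a atTop (nhds 0) := by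
    have := a.zero_at_infty'
    rwa [cocompact_eq_atTop] at this
  obtain ⟨N₀, hN₀⟩ := (Metric.tendsto_atTop.mp hz) (ε / 2) (by linarith)
  refine ⟨N₀, fun N hN => ?_⟩
  have hle : ‖PN N * a - a‖ ≤ ε / 2 := by
    apply czero_norm_le _ (by linarith)
    intro m
    have : (PN N * a - a) m = PN N m * a m - a m := by simp
    rw [this, PN_apply]
    by_cases hm : m < N
    · simp [hm]; positivity
    · simp only [hm, if_neg]
      have hmN : N₀ ≤ m := le_trans hN (Nat.le_of_not_lt hm)
      have := hN₀ m hmN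
      rw [dist_zero_right] at this
      simp only [if_false]
      calc ‖(0 : ℂ) * a m - a m‖ = ‖a m‖ := by simp
      _ ≤ ε / 2 := le_of_lt this
  calc dist ‖PN N * a - a‖ 0 = ‖PN N * a - a‖ := by
        rw [dist_zero_right, Real.norm_eq_abs, abs_of_nonneg (norm_nonneg _)]
  _ ≤ ε / 2 := hle
  _ < ε := by linarith

namespace C0Mod

variable {X : Type} [NormedAddCommGroup X] [NormedSpace ℂ X] (M : C0Mod X)

lemma smul_zero' (a : czero) : M.smul a (0 : X) = 0 := (M.lsmul a).map_zero

lemma sub_smul (a b : czero) (x : X) : M.smul (a - b) x = M.smul a x - M.smul b x := by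
  have h := M.add_smul (a - b) b x
  rw [sub_add_cancel] at h
  rw [eq_sub_iff_add_eq, ← h]

lemma norm_smul_le_one (a : czero) (ha : ‖a‖ ≤ 1) (x : X) : ‖M.smul a x‖ ≤ ‖x‖ := by
  calc ‖M.smul a x‖ ≤ ‖a‖ * ‖x‖ := M.norm_smul_le a x
  _ ≤ 1 * ‖x‖ := by
      apply mul_le_mul_of_nonneg_right ha (norm_nonneg x)
  _ = ‖x‖ := one_mul _

lemma tendsto_PN_smul {y : X} (hy : y ∈ M.essSet) :
    Tendsto (fun N => M.smul (PN N) y) atTop (nhds y) := by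
  set S : Submodule ℂ X :=
    Submodule.span ℂ {y : X | ∃ (a : czero) (x : X), y = M.smul a x} with hS
  have hspan : ∀ z ∈ S, Tendsto (fun N => M.smul (PN N) z) atTop (nhds z) := by
    intro z hz
    induction hz using Submodule.span_induction with
    | mem z hz =>
      obtain ⟨a, w, rfl⟩ := hz
      rw [tendsto_iff_norm_sub_tendsto_zero]
      apply squeeze_zero (fun N => norm_nonneg _)
        (g := fun N => ‖PN N * a - a‖ * ‖w‖)
      · intro N
        have : M.smul (PN N) (M.smul a w) - M.smul a w = M.smul (PN N * a - a) w := by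
          rw [M.sub_smul, M.mul_smul]
        rw [this]
        exact M.norm_smul_le _ _
      · have := (tendsto_norm_PN_mul_sub a).mul_const ‖w‖
        simpa using this
    | zero => simpa [M.smul_zero'] using tendsto_const_nhds
    | add u v _ _ hu hv =>
      have := hu.add hv
      simpa [M.smul_add] using this
    | smul c u _ hu =>
      have := hu.const_smul c
      simpa [M.csmul_right] using this
  rw [Metric.tendsto_atTop]
  intro ε hε
  have hy' : y ∈ closure (S : Set X) := hy
  obtain ⟨y', hy'S, hdist⟩ := Metric.mem_closure_iff.mp hy' (ε / 3) (by linarith)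
  obtain ⟨N₀, hN₀⟩ := (Metric.tendsto_atTop.mp (hspan y' hy'S)) (ε / 3) (by linarith)
  refine ⟨N₀, fun N hN => ?_⟩
  have h1 : ‖M.smul (PN N) (y - y')‖ ≤ ‖y - y'‖ :=
    M.norm_smul_le_one _ (norm_PN_le N) _
  have h2 : dist (M.smul (PN N) y') y' < ε / 3 := hN₀ N hN
  have hsub : M.smul (PN N) y - M.smul (PN N) y' = M.smul (PN N) (y - y') :=
    ((M.lsmul (PN N)).map_sub y y').symm
  have hyy' : ‖y - y'‖ < ε / 3 := by
    rw [← dist_eq_norm]; exact hdist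
  rw [dist_eq_norm]
  have b1 : ‖M.smul (PN N) y - M.smul (PN N) y'‖ < ε / 3 := by
    rw [hsub]; exact lt_of_le_of_lt h1 hyy'
  have b2 : ‖M.smul (PN N) y' - y'‖ < ε / 3 := by rw [← dist_eq_norm]; exact h2
  have b3 : ‖y' - y‖ < ε / 3 := by rw [norm_sub_rev]; exact hyy'
  calc ‖M.smul (PN N) y - y‖
      = ‖(M.smul (PN N) y - M.smul (PN N) y') + (M.smul (PN N) y' - y') + (y' - y)‖ := by
        congr 1; abel
  _ ≤ ‖M.smul (PN N) y - M.smul (PN N) y'‖ + ‖M.smul (PN N) y' - y'‖ + ‖y' - y‖ :=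
        norm_add₃_le
  _ < ε / 3 + ε / 3 + ε / 3 := add_lt_add (add_lt_add b1 b2) b3
  _ = ε := by ring

end C0Mod

/-- If `φ : X → Y` is a topologically injective morphism of
contractive normed `c₀`-modules and `φ x` lies in the essential part of `Y`,
then `x` lies in the essential part of `X`. -/
theorem topologically_injective_essential_preimage
    {X Y : Type} [NormedAddCommGroup X] [NormedSpace ℂ X]
    [NormedAddCommGroup Y] [NormedSpace ℂ Y]
    (Mx : C0Mod X) (My : C0Mod Y) (φ : X →L[ℂ] Y)
    (hmor : ∀ (a : czero) (x : X), φ (Mx.smul a x) = My.smul a (φ x))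
    (c : ℝ) (hc : 0 < c) (hlow : ∀ x : X, c * ‖x‖ ≤ ‖φ x‖)
    (x : X) (hx : φ x ∈ My.essSet) :
    x ∈ Mx.essSet := by
  have hY : Tendsto (fun N => My.smul (PN N) (φ x)) atTop (nhds (φ x)) :=
    My.tendsto_PN_smul hx
  have hφ : Tendsto (fun N => ‖φ (Mx.smul (PN N) x - x)‖) atTop (nhds 0) := by
    have : ∀ N, φ (Mx.smul (PN N) x - x) = My.smul (PN N) (φ x) - φ x := by
      intro N
      rw [φ.map_sub, hmor]
    simp only [this]
    exact tendsto_iff_norm_sub_tendsto_zero.mp hY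
  have hX : Tendsto (fun N => Mx.smul (PN N) x) atTop (nhds x) := by
    rw [tendsto_iff_norm_sub_tendsto_zero]
    apply squeeze_zero (fun N => norm_nonneg _)
      (g := fun N => c⁻¹ * ‖φ (Mx.smul (PN N) x - x)‖)
    · intro N
      have h := hlow (Mx.smul (PN N) x - x)
      calc ‖Mx.smul (PN N) x - x‖ = c⁻¹ * (c * ‖Mx.smul (PN N) x - x‖) := by
            field_simp
      _ ≤ c⁻¹ * ‖φ (Mx.smul (PN N) x - x)‖ :=
            mul_le_mul_of_nonneg_left h (by positivity)
    · have := hφ.const_mul c⁻¹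
      simpa using this
  have hmem : ∀ N, Mx.smul (PN N) x ∈
      (Submodule.span ℂ {y : X | ∃ (a : czero) (x : X), y = Mx.smul a x} : Set X) := by
    intro N
    apply Submodule.subset_span
    exact ⟨PN N, x, rfl⟩
  exact mem_closure_of_tendsto hX (Eventually.of_forall hmem)
end
end
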